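/- arXiv:0901.1783 — 7 statements merged into one kernel-verified Lean document; each statement's English description precedes it below -/
import Mathlib

section
/- Let m, n be positive integers and let A, B ∈ SL(2,ℂ) satisfy A^m = B^n. If A^m ≠ Id and A^m ≠ -Id, then the pair (A, B) is reducible, i.e., there exists a nonzero vector v ∈ ℂ² that is an eigenvector of both A and B. -/
open Matrix

/-- A pair `(A, B)` of `2 × 2` complex matrices is reducible if there is a nonzero
common eigenvector. -/
def IsReduciblePair (A B : Matrix (Fin 2) (Fin 2) ℂ) : Prop :=
  ∃ v : Fin 2 → ℂ, v ≠ 0 ∧ (∃ a : ℂ, A.mulVec v = a • v) ∧ (∃ b : ℂ, B.mulVec v = b • v)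

/-!
`C = A ^ m = B ^ n` commutes with both `A` and `B`. Since `det C = 1` and `C ≠ ±1`, `C` is not
scalar, so each eigenspace of `C` is a line in `ℂ²`. Anything commuting with `C` preserves that
line, so a spanning vector of it is a common eigenvector of `A` and `B`.
-/

namespace Module.End

open Module

variable {K V : Type*} [Field K] [AddCommGroup V] [Module K V]

theorem eigenspace_ne_top_of_ne_smul_one {f : End K V} {μ : K} (hf : f ≠ μ • 1) :
    f.eigenspace μ ≠ ⊤ := by
  refine fun htop => hf (LinearMap.ext fun w => ?_)
  simpa using mem_eigenspace_iff.mp (htop ▸ Submodule.mem_top : w ∈ f.eigenspace μ)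

theorem exists_smul_eq_of_hasEigenvector_of_commute [FiniteDimensional K V]
    (hV : finrank K V = 2) {f g : End K V} {μ : K} {v : V} (hv : f.HasEigenvector μ v)
    (hf : f ≠ μ • 1) (hgf : Commute g f) : ∃ a : K, g v = a • v := by
  set E := f.eigenspace μ
  have hE : finrank K E = 1 := by
    have hlt : finrank K E < 2 := hV ▸ Submodule.finrank_lt (eigenspace_ne_top_of_ne_smul_one hf)
    have hpos : finrank K E ≠ 0 := by
      rw [Ne, Submodule.finrank_eq_zero]
      exact fun hbot => hv.2 ((Submodule.mem_bot K).mp (hbot ▸ hv.1))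
    omega
  have hgv : g v ∈ E := mapsTo_genEigenspace_of_comm hgf.symm μ 1 hv.1
  obtain ⟨a, ha⟩ := Submodule.mem_span_singleton.mp
    (eq_span_singleton_of_mem_of_finrank_eq_one hE hv.1 hv.2 ▸ hgv)
  exact ⟨a, ha.symm⟩

theorem exists_forall_commute_smul_eq [IsAlgClosed K] [FiniteDimensional K V]
    (hV : finrank K V = 2) {f : End K V} (hf : ∀ c : K, f ≠ c • 1) :
    ∃ v ≠ 0, ∀ g : End K V, Commute g f → ∃ a : K, g v = a • v := by
  have : Nontrivial V := nontrivial_of_finrank_eq_succ hV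
  obtain ⟨μ, hμ⟩ := f.exists_eigenvalue
  obtain ⟨v, hv⟩ := hμ.exists_hasEigenvector
  exact ⟨v, hv.2, fun g hg => exists_smul_eq_of_hasEigenvector_of_commute hV hv (hf μ) hg⟩

end Module.End

theorem Matrix.eq_one_or_eq_neg_one_of_eq_smul_one_of_det_eq_one {K : Type*} [Field K]
    {C : Matrix (Fin 2) (Fin 2) K} {c : K} (hc : C = c • 1) (hC : C.det = 1) :
    C = 1 ∨ C = -1 := by
  rw [hc, det_smul, det_one, Fintype.card_fin, mul_one, sq, mul_self_eq_one_iff] at hC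
  rcases hC with rfl | rfl
  · simp [hc]
  · simp [hc]

theorem stmt0_general (m n : ℕ)
    (A B : Matrix (Fin 2) (Fin 2) ℂ) (hA : A.det = 1)
    (h : A ^ m = B ^ n) (h1 : A ^ m ≠ 1) (h2 : A ^ m ≠ -1) :
    IsReduciblePair A B := by
  have hdet : (A ^ m).det = 1 := by rw [det_pow, hA, one_pow]
  have hscalar : ∀ c : ℂ, toLinAlgEquiv' (A ^ m) ≠ c • 1 := fun c hc => by
    have : A ^ m = c • 1 := toLinAlgEquiv'.injective (by rw [hc, map_smul, map_one])
    exact (eq_one_or_eq_neg_one_of_eq_smul_one_of_det_eq_one this hdet).elim h1 h2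
  obtain ⟨v, hv, hcomm⟩ := Module.End.exists_forall_commute_smul_eq (by simp) hscalar
  have hAcomm := ((Commute.refl A).pow_right m).map toLinAlgEquiv'
  have hBcomm := (h ▸ (Commute.refl B).pow_right n).map toLinAlgEquiv'
  exact ⟨v, hv, by simpa using hcomm _ hAcomm, by simpa using hcomm _ hBcomm⟩

theorem stmt0 (m n : ℕ) (hm : 0 < m) (hn : 0 < n)
    (A B : Matrix (Fin 2) (Fin 2) ℂ) (hA : A.det = 1) (hB : B.det = 1)
    (h : A ^ m = B ^ n) (h1 : A ^ m ≠ 1) (h2 : A ^ m ≠ -1) :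
    IsReduciblePair A B :=
  stmt0_general m n A B hA h h1 h2
end

section
/- Let m, n be positive integers and let A, B ∈ SL(2,ℂ) satisfy A^m = B^n. If A is not diagonalizable (i.e., A is not similar over ℂ to a diagonal matrix) or B is not diagonalizable, then the pair (A, B) is reducible, i.e., there exists a nonzero vector v ∈ ℂ² that is an eigenvector of both A and B. -/
open Matrix

/-- A `2 × 2` complex matrix is diagonalizable if it is similar over `ℂ` to a
diagonal matrix. -/
def IsDiagonalizable (M : Matrix (Fin 2) (Fin 2) ℂ) : Prop :=
  ∃ P : Matrix (Fin 2) (Fin 2) ℂ, IsUnit P.det ∧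
    ∃ d : Fin 2 → ℂ, M = P * Matrix.diagonal d * P⁻¹

/-!
A non-diagonalizable matrix with nonzero determinant is parabolic (non-scalar with a double
eigenvalue), and so are its nonzero powers. Hence `A ^ m = B ^ n` is a scalar plus a nonzero
square-zero matrix `N`. Both `A` and `B` commute with `A ^ m`, hence with `N`, so both preserve the
line `ker N`, and a generator of this line is a common eigenvector.
-/

namespace Matrix

variable {n K : Type*} [Fintype n] [DecidableEq n] [Field K]

lemma eq_mul_diagonal_mul_inv_of_mulVec_eq_smul {M : Matrix n n K} {c : n → n → K} {d : n → K}
    (hc : LinearIndependent K c) (h : ∀ j, M *ᵥ c j = d j • c j) :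
    M = (of c)ᵀ * diagonal d * (of c)ᵀ⁻¹ := by
  have hunit : IsUnit (of c)ᵀ := linearIndependent_cols_iff_isUnit.mp hc
  have hMP : M * (of c)ᵀ = (of c)ᵀ * diagonal d := by
    ext i j
    rw [mul_diagonal]
    simpa [mul_apply, mulVec, dotProduct, mul_comm] using congrFun (h j) i
  rw [← hMP, mul_nonsing_inv_cancel_right _ _ (isUnit_iff_isUnit_det _ |>.mp hunit)]

lemma exists_mulVec_eq_smul_of_det_sub_scalar_eq_zero {M : Matrix n n K} {e : K}
    (h : (M - scalar n e).det = 0) : ∃ v ≠ 0, M *ᵥ v = e • v := by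
  obtain ⟨v, hv, hMv⟩ := exists_mulVec_eq_zero_iff.mpr h
  refine ⟨v, hv, ?_⟩
  rwa [sub_mulVec, sub_eq_zero, scalar_apply, ← smul_one_eq_diagonal, smul_mulVec, one_mulVec]
    at hMv

lemma det_sub_scalar_fin_two (M : Matrix (Fin 2) (Fin 2) K) (e : K) :
    (M - scalar (Fin 2) e).det = e ^ 2 - M.trace * e + M.det := by
  simp only [det_fin_two, trace_fin_two, sub_apply, scalar_apply, diagonal_apply_eq,
    diagonal_apply_ne _ zero_ne_one, diagonal_apply_ne _ one_ne_zero, sub_zero]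
  ring

lemma exists_smul_eq_of_mulVec_eq_zero {N : Matrix (Fin 2) (Fin 2) K} (hN : N ≠ 0)
    {v w : Fin 2 → K} (hv : v ≠ 0) (hNv : N *ᵥ v = 0) (hNw : N *ᵥ w = 0) :
    ∃ a : K, a • v = w := by
  by_contra! h
  -- independent `v, w` in the kernel would make `N` similar to the zero diagonal matrix
  apply hN
  rw [eq_mul_diagonal_mul_inv_of_mulVec_eq_smul (M := N) (d := 0)
    ((LinearIndependent.pair_iff' hv).mpr h)]
  · simp
  · intro j
    rw [Pi.zero_apply, zero_smul]
    fin_cases j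
    exacts [hNv, hNw]

lemma exists_mulVec_eq_smul_of_commute {N X : Matrix (Fin 2) (Fin 2) K} (hN : N ≠ 0)
    {v : Fin 2 → K} (hv : v ≠ 0) (hNv : N *ᵥ v = 0) (hXN : Commute X N) :
    ∃ a : K, X *ᵥ v = a • v := by
  obtain ⟨a, ha⟩ := exists_smul_eq_of_mulVec_eq_zero (w := X *ᵥ v) hN hv hNv
    (by rw [mulVec_mulVec, ← hXN.eq, ← mulVec_mulVec, hNv, mulVec_zero])
  exact ⟨a, ha.symm⟩

lemma IsParabolic.pow_of_det_ne_zero [CharZero K] {M : Matrix (Fin 2) (Fin 2) K}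
    (hM : M.IsParabolic) (hdet : M.det ≠ 0) {m : ℕ} (hm : m ≠ 0) : (M ^ m).IsParabolic := by
  have := GeneralLinearGroup.IsParabolic.pow (g := GeneralLinearGroup.mkOfDetNeZero M hdet) hM hm
  simpa [GeneralLinearGroup.IsParabolic, Units.val_pow_eq_pow_val] using this

end Matrix

lemma isDiagonalizable_scalar (a : ℂ) : IsDiagonalizable (scalar (Fin 2) a) :=
  ⟨1, by simp, fun _ ↦ a, by simp⟩

lemma isDiagonalizable_of_mulVec_eq_smul {M : Matrix (Fin 2) (Fin 2) ℂ} {a b : ℂ}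
    (hab : a ≠ b) {v w : Fin 2 → ℂ} (hv : v ≠ 0) (hw : w ≠ 0) (hMv : M *ᵥ v = a • v)
    (hMw : M *ᵥ w = b • w) : IsDiagonalizable M := by
  have hvw : LinearIndependent ℂ ![v, w] := by
    refine (LinearIndependent.pair_iff' hv).mpr fun c hc ↦ hw ?_
    have : (a - b) • w = 0 := by
      rw [sub_smul, ← hMw, ← hc, mulVec_smul, hMv, smul_comm, sub_self]
    exact (smul_eq_zero.mp this).resolve_left (sub_ne_zero.mpr hab)
  refine ⟨_, (isUnit_iff_isUnit_det _).mp (linearIndependent_cols_iff_isUnit.mp hvw), ![a, b],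
    eq_mul_diagonal_mul_inv_of_mulVec_eq_smul hvw fun j ↦ ?_⟩
  fin_cases j
  exacts [hMv, hMw]

lemma isParabolic_of_not_isDiagonalizable {M : Matrix (Fin 2) (Fin 2) ℂ}
    (hM : ¬ IsDiagonalizable M) : M.IsParabolic := by
  refine ⟨fun ⟨a, ha⟩ ↦ hM (ha ▸ isDiagonalizable_scalar a), ?_⟩
  by_contra hdiscr
  obtain ⟨s, hs⟩ := IsAlgClosed.exists_pow_nat_eq M.discr two_pos
  have heigen (e : ℂ) (he : (2 * e - M.trace) ^ 2 = M.discr) :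
      ∃ v ≠ 0, M *ᵥ v = e • v := by
    refine exists_mulVec_eq_smul_of_det_sub_scalar_eq_zero ?_
    rw [discr_fin_two] at he
    rw [det_sub_scalar_fin_two]
    linear_combination he / 4
  have hs0 : s ≠ 0 := by rintro rfl; exact hdiscr (by simp [← hs])
  obtain ⟨v, hv, hMv⟩ := heigen ((M.trace + s) / 2) (by rw [← hs]; ring)
  obtain ⟨w, hw, hMw⟩ := heigen ((M.trace - s) / 2) (by rw [← hs]; ring)
  refine hM (isDiagonalizable_of_mulVec_eq_smul ?_ hv hw hMv hMw)
  intro h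
  exact hs0 (by linear_combination h)

lemma isReduciblePair_of_commute {A B N : Matrix (Fin 2) (Fin 2) ℂ} (hN : N ≠ 0)
    (hdet : N.det = 0) (hA : Commute A N) (hB : Commute B N) : IsReduciblePair A B := by
  obtain ⟨v, hv, hNv⟩ := exists_mulVec_eq_zero_iff.mpr hdet
  obtain ⟨a, ha⟩ := exists_mulVec_eq_smul_of_commute hN hv hNv hA
  obtain ⟨b, hb⟩ := exists_mulVec_eq_smul_of_commute hN hv hNv hB
  exact ⟨v, hv, ⟨a, ha⟩, ⟨b, hb⟩⟩

theorem stmt2 (m n : ℕ) (hm : 0 < m) (hn : 0 < n)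
    (A B : Matrix (Fin 2) (Fin 2) ℂ) (hA : A.det = 1) (hB : B.det = 1)
    (h : A ^ m = B ^ n) (hnd : ¬ IsDiagonalizable A ∨ ¬ IsDiagonalizable B) :
    IsReduciblePair A B := by
  have hpow : (A ^ m).IsParabolic := by
    rcases hnd with hndA | hndB
    · exact (isParabolic_of_not_isDiagonalizable hndA).pow_of_det_ne_zero
        (hA ▸ one_ne_zero) hm.ne'
    · rw [h]
      exact (isParabolic_of_not_isDiagonalizable hndB).pow_of_det_ne_zero
        (hB ▸ one_ne_zero) hn.ne'
  obtain ⟨a, N, hAN, hN, hN2⟩ := isParabolic_iff_exists.mp hpow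
  have hcomm {X : Matrix (Fin 2) (Fin 2) ℂ} (hX : Commute X (A ^ m)) : Commute X N := by
    simpa [hAN] using hX.sub_right (scalar_commute a (fun _ ↦ Commute.all _ _) X).symm
  refine isReduciblePair_of_commute hN ?_ (hcomm (.self_pow A m)) (hcomm (h ▸ .self_pow B n))
  rw [← pow_eq_zero_iff two_ne_zero, ← det_pow N 2, hN2, det_zero]
end

section
/- Let m, n be positive integers and let A, B ∈ SL(2,ℂ) satisfy A^m = B^n. If the pair (A, B) is irreducible (no nonzero common eigenvector), then A^{2m} = Id, A² ≠ Id, B^{2n} = Id, and B² ≠ Id; in particular A^m = B^n equals Id or -Id. -/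
/-!
`C := A ^ m = B ^ n` commutes with both `A` and `B`. A matrix commuting with an irreducible pair
is scalar: otherwise some eigenspace of `C` is a line, it is invariant under `A` and `B`, and so
it is spanned by a common eigenvector. Hence `C = μ • 1` with `μ ^ 2 = det C = 1`. Similarly,
by Cayley–Hamilton `A ^ 2 = 1` and `det A = 1` give `trace A • A = 2 • 1`, so `A` would be
scalar, and a scalar `A` shares every eigenvector of `B`.
-/

open Matrix

open Module End

section

variable {K : Type*} [Field K]

theorem Matrix.sq_fin_two_eq_trace_smul_sub_det_smul (M : Matrix (Fin 2) (Fin 2) K) :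
    M ^ 2 = M.trace • M - M.det • 1 := by
  have := M.aeval_self_charpoly
  rw [charpoly_fin_two] at this
  simp only [map_add, map_sub, map_mul, map_pow, Polynomial.aeval_X, Polynomial.aeval_C,
    Algebra.algebraMap_eq_smul_one, smul_mul_assoc, one_mul] at this
  rw [← sub_eq_zero, ← this]; abel

theorem Matrix.exists_eq_smul_one_of_sq_eq_one [NeZero (2 : K)] {M : Matrix (Fin 2) (Fin 2) K}
    (hdet : M.det = 1) (hsq : M ^ 2 = 1) : ∃ c : K, M = c • 1 := by
  have htr : M.trace • M = (2 : K) • 1 := by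
    have := M.sq_fin_two_eq_trace_smul_sub_det_smul
    rw [hsq, hdet, one_smul] at this
    rw [two_smul, ← sub_eq_iff_eq_add.mp this.symm]
  have ht : M.trace ≠ 0 := by
    rintro ht
    rw [ht, zero_smul, eq_comm, smul_eq_zero] at htr
    exact htr.elim (NeZero.ne 2) one_ne_zero
  exact ⟨2 / M.trace, by rw [div_eq_inv_mul, mul_smul, ← htr, inv_smul_smul₀ ht]⟩

theorem Matrix.exists_mulVec_eq_smul [IsAlgClosed K] {ι : Type*} [Fintype ι] [DecidableEq ι]
    [Nonempty ι] (M : Matrix ι ι K) : ∃ v : ι → K, v ≠ 0 ∧ ∃ a : K, M *ᵥ v = a • v := by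
  obtain ⟨μ, hμ⟩ := exists_eigenvalue (toLin' M)
  obtain ⟨v, hv⟩ := hμ.exists_hasEigenvector
  exact ⟨v, hv.2, μ, by simpa using hv.apply_eq_smul⟩

theorem Submodule.eq_span_singleton_of_ne_top {V : Type*} [AddCommGroup V] [Module K V]
    [FiniteDimensional K V] (hV : finrank K V = 2) {E : Submodule K V} (hE : E ≠ ⊤) {v : V}
    (hv : v ∈ E) (hv0 : v ≠ 0) : E = K ∙ v := by
  refine (eq_of_le_of_finrank_le ((span_singleton_le_iff_mem v E).mpr hv) ?_).symm
  have := finrank_lt hE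
  rw [finrank_span_singleton hv0]
  omega

theorem Matrix.exists_eq_smul_one_of_commute [IsAlgClosed K] {A B C : Matrix (Fin 2) (Fin 2) K}
    (hCA : Commute C A) (hCB : Commute C B)
    (hirr : ¬ ∃ v : Fin 2 → K, v ≠ 0 ∧ (∃ a : K, A *ᵥ v = a • v) ∧ ∃ b : K, B *ᵥ v = b • v) :
    ∃ μ : K, C = μ • 1 := by
  obtain ⟨μ, hμ⟩ := exists_eigenvalue (toLin' C)
  obtain ⟨v, hv⟩ := hμ.exists_hasEigenvector
  have mem_E {w} : w ∈ eigenspace (toLin' C) μ ↔ C *ᵥ w = μ • w := by simp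
  refine ⟨μ, ?_⟩
  by_cases hE : eigenspace (toLin' C) μ = ⊤
  · refine ext_iff_mulVec.mpr fun w ↦ ?_
    rw [smul_mulVec, one_mulVec, ← mem_E, hE]
    exact Submodule.mem_top
  have hEv := Submodule.eq_span_singleton_of_ne_top (by simp) hE hv.1 hv.2
  have eigenvector_of_commute {M} (hM : Commute C M) : ∃ a : K, M *ᵥ v = a • v := by
    have hMv : M *ᵥ v ∈ eigenspace (toLin' C) μ := by
      rw [mem_E, mulVec_mulVec, hM.eq, ← mulVec_mulVec, mem_E.mp hv.1, mulVec_smul]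
    rw [hEv, Submodule.mem_span_singleton] at hMv
    obtain ⟨a, ha⟩ := hMv
    exact ⟨a, ha.symm⟩
  exact (hirr ⟨v, hv.2, eigenvector_of_commute hCA, eigenvector_of_commute hCB⟩).elim

end

theorem isReduciblePair_of_eq_smul_one_left {A : Matrix (Fin 2) (Fin 2) ℂ} {c : ℂ}
    (hA : A = c • 1) (B : Matrix (Fin 2) (Fin 2) ℂ) : IsReduciblePair A B := by
  obtain ⟨v, hv0, b, hb⟩ := B.exists_mulVec_eq_smul
  exact ⟨v, hv0, ⟨c, by rw [hA, smul_mulVec, one_mulVec]⟩, b, hb⟩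

theorem isReduciblePair_of_eq_smul_one_right (A : Matrix (Fin 2) (Fin 2) ℂ)
    {B : Matrix (Fin 2) (Fin 2) ℂ} {c : ℂ} (hB : B = c • 1) : IsReduciblePair A B := by
  obtain ⟨v, hv0, a, ha⟩ := A.exists_mulVec_eq_smul
  exact ⟨v, hv0, ⟨a, ha⟩, c, by rw [hB, smul_mulVec, one_mulVec]⟩

theorem stmt4_general (m n : ℕ)
    (A B : Matrix (Fin 2) (Fin 2) ℂ) (hA : A.det = 1) (hB : B.det = 1)
    (h : A ^ m = B ^ n) (hirr : ¬ IsReduciblePair A B) :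
    A ^ (2 * m) = 1 ∧ A ^ 2 ≠ 1 ∧ B ^ (2 * n) = 1 ∧ B ^ 2 ≠ 1 ∧
      (A ^ m = 1 ∨ A ^ m = -1) := by
  obtain ⟨μ, hμ⟩ : ∃ μ : ℂ, A ^ m = μ • 1 :=
    exists_eq_smul_one_of_commute (Commute.pow_self A m) (h ▸ Commute.pow_self B n) hirr
  have hμ2 : μ ^ 2 = 1 := by
    have := congrArg det hμ
    rwa [det_pow, hA, one_pow, det_smul, det_one, Fintype.card_fin, mul_one, eq_comm] at this
  have hsq : (A ^ m) ^ 2 = 1 := by rw [hμ, smul_pow, hμ2, one_smul, one_pow]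
  refine ⟨by rw [mul_comm, pow_mul, hsq], fun hA2 ↦ hirr ?_, by rw [mul_comm, pow_mul, ← h, hsq],
    fun hB2 ↦ hirr ?_, ?_⟩
  · obtain ⟨c, hc⟩ := exists_eq_smul_one_of_sq_eq_one hA hA2
    exact isReduciblePair_of_eq_smul_one_left hc B
  · obtain ⟨c, hc⟩ := exists_eq_smul_one_of_sq_eq_one hB hB2
    exact isReduciblePair_of_eq_smul_one_right A hc
  · rcases sq_eq_one_iff.mp hμ2 with rfl | rfl <;> simp [hμ]

theorem stmt4 (m n : ℕ) (hm : 0 < m) (hn : 0 < n)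
    (A B : Matrix (Fin 2) (Fin 2) ℂ) (hA : A.det = 1) (hB : B.det = 1)
    (h : A ^ m = B ^ n) (hirr : ¬ IsReduciblePair A B) :
    A ^ (2 * m) = 1 ∧ A ^ 2 ≠ 1 ∧ B ^ (2 * n) = 1 ∧ B ^ 2 ≠ 1 ∧
      (A ^ m = 1 ∨ A ^ m = -1) :=
  stmt4_general m n A B hA hB h hirr
end

section
/- Let m, n be positive integers. Let λ, μ ∈ ℂ satisfy λ^{2m} = 1, λ² ≠ 1, μ² ≠ 1 and λ^m = μ^n, and let r ∈ ℂ with r ≠ 0 and r ≠ 1. Set A = D_λ (the diagonal matrix diag(λ, λ⁻¹)) and B = Q_r D_μ Q_r⁻¹, where Q_r is the matrix with rows (1, r-1) and (1, r). Then A, B ∈ SL(2,ℂ), A^m = B^n, and the pair (A, B) is irreducible, i.e., A and B have no common nonzero eigenvector. -/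
/-!
`A = D_λ` is diagonal with distinct eigenvalues `λ ≠ λ⁻¹`, so its only eigenvectors are the
multiples of the standard basis vectors `e₀, e₁`. These are eigenvectors of
`B = Q_r D_μ Q_r⁻¹` only if the corresponding off-diagonal entries `r (μ - μ⁻¹)` and
`(r - 1) (μ⁻¹ - μ)` of `B` vanish, which `r ≠ 0, 1` and `μ² ≠ 1` exclude. Moreover
`A ^ m = D_{λ^m}` and `B ^ n = Q_r D_{μ^n} Q_r⁻¹`, and `c = λ^m = μ^n` satisfies `c² = 1`,
so `D_c = c • 1` and both powers equal `c • 1`.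
-/

open Matrix

/-- The diagonal matrix `diag(λ, λ⁻¹)`. -/
noncomputable def Dmat (l : ℂ) : Matrix (Fin 2) (Fin 2) ℂ := !![l, 0; 0, l⁻¹]

/-- The matrix with rows `(1, r-1)` and `(1, r)`. -/
def Qmat (r : ℂ) : Matrix (Fin 2) (Fin 2) ℂ := !![1, r - 1; 1, r]

lemma ne_inv_of_sq_ne_one {G₀ : Type*} [GroupWithZero G₀] {x : G₀} (hx : x ≠ 0)
    (h : x ^ 2 ≠ 1) : x ≠ x⁻¹ := by
  intro hinv
  apply h
  rw [sq]
  nth_rewrite 2 [hinv]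
  exact mul_inv_cancel₀ hx

lemma Matrix.conj_pow_of_isUnit {n α : Type*} [Fintype n] [DecidableEq n] [CommRing α]
    {M : Matrix n n α} (hM : IsUnit M) (N : Matrix n n α) (k : ℕ) :
    (M * N * M⁻¹) ^ k = M * N ^ k * M⁻¹ := by
  rw [← hM.unit_spec, ← coe_units_inv, Units.conj_pow]

lemma apply_mul_eq_zero_of_mulVec_single_eq_smul {n R : Type*} [Fintype n] [DecidableEq n]
    [Semiring R] {M : Matrix n n R} {i j : n} (hji : j ≠ i) {x b : R}
    (h : M *ᵥ Pi.single i x = b • Pi.single i x) : M j i * x = 0 := by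
  simpa [Pi.single_apply, hji] using congrFun h j

lemma det_Dmat {l : ℂ} (hl : l ≠ 0) : (Dmat l).det = 1 := by
  simp [Dmat, det_fin_two_of, mul_inv_cancel₀ hl]

lemma Dmat_pow (l : ℂ) (k : ℕ) : Dmat l ^ k = Dmat (l ^ k) := by
  have hdiag : ∀ x : ℂ, Dmat x = diagonal ![x, x⁻¹] := fun x => by
    ext i j; fin_cases i <;> fin_cases j <;> simp [Dmat]
  rw [hdiag, hdiag, diagonal_pow]
  ext i j; fin_cases i <;> fin_cases j <;> simp [diagonal, inv_pow]

lemma Dmat_eq_smul_one_of_sq_eq_one {c : ℂ} (hc : c ^ 2 = 1) : Dmat c = c • 1 := by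
  have hinv : c⁻¹ = c := inv_eq_of_mul_eq_one_right (by rw [← sq, hc])
  ext i j; fin_cases i <;> fin_cases j <;> simp [Dmat, hinv]

lemma exists_eq_single_of_Dmat_mulVec_eq_smul {l a : ℂ} (hl : l ≠ l⁻¹) {v : Fin 2 → ℂ}
    (h : Dmat l *ᵥ v = a • v) : ∃ i, v = Pi.single i (v i) := by
  have h0 : l * v 0 = a * v 0 := by simpa [Dmat, mulVec, dotProduct] using congrFun h 0
  have h1 : l⁻¹ * v 1 = a * v 1 := by simpa [Dmat, mulVec, dotProduct] using congrFun h 1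
  by_cases hv0 : v 0 = 0
  · exact ⟨1, by ext j; fin_cases j <;> simp [hv0]⟩
  by_cases hv1 : v 1 = 0
  · exact ⟨0, by ext j; fin_cases j <;> simp [hv1]⟩
  exact absurd ((mul_right_cancel₀ hv0 h0).trans (mul_right_cancel₀ hv1 h1).symm) hl

lemma det_Qmat (r : ℂ) : (Qmat r).det = 1 := by
  simp [Qmat, det_fin_two_of]

lemma isUnit_Qmat (r : ℂ) : IsUnit (Qmat r) :=
  (isUnit_iff_isUnit_det _).mpr (by rw [det_Qmat]; exact isUnit_one)

lemma Qmat_inv (r : ℂ) : (Qmat r)⁻¹ = !![r, 1 - r; -1, 1] := by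
  apply inv_eq_right_inv
  ext i j; fin_cases i <;> fin_cases j <;> simp [Qmat]

lemma Qmat_mul_Dmat_mul_inv (r mu : ℂ) :
    Qmat r * Dmat mu * (Qmat r)⁻¹ =
      !![r * mu - (r - 1) * mu⁻¹, (r - 1) * (mu⁻¹ - mu);
         r * (mu - mu⁻¹), (1 - r) * mu + r * mu⁻¹] := by
  rw [Qmat_inv]
  ext i j; fin_cases i <;> fin_cases j <;> simp [Qmat, Dmat] <;> ring

theorem not_isReduciblePair_Dmat_Qmat_conj {l mu r : ℂ} (hl : l ≠ l⁻¹) (hmu : mu ≠ mu⁻¹)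
    (hr0 : r ≠ 0) (hr1 : r ≠ 1) :
    ¬ IsReduciblePair (Dmat l) (Qmat r * Dmat mu * (Qmat r)⁻¹) := by
  rintro ⟨v, hv, ⟨a, ha⟩, ⟨b, hb⟩⟩
  obtain ⟨i, hvi⟩ := exists_eq_single_of_Dmat_mulVec_eq_smul hl ha
  have hx : v i ≠ 0 := fun h => hv (by rw [hvi, h, Pi.single_zero])
  rw [hvi, Qmat_mul_Dmat_mul_inv] at hb
  fin_cases i
  · exact hx (by simpa [sub_eq_zero, hr0, hmu] using
      apply_mul_eq_zero_of_mulVec_single_eq_smul (j := 1) (by decide) hb)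
  · exact hx (by simpa [sub_eq_zero, hr1, hmu.symm] using
      apply_mul_eq_zero_of_mulVec_single_eq_smul (j := 0) (by decide) hb)

theorem stmt6 (m n : ℕ) (hm : 0 < m) (hn : 0 < n)
    (l mu r : ℂ) (hl : l ^ (2 * m) = 1) (hl2 : l ^ 2 ≠ 1) (hmu2 : mu ^ 2 ≠ 1)
    (hlm : l ^ m = mu ^ n) (hr0 : r ≠ 0) (hr1 : r ≠ 1)
    (A B : Matrix (Fin 2) (Fin 2) ℂ)
    (hAdef : A = Dmat l) (hBdef : B = Qmat r * Dmat mu * (Qmat r)⁻¹) :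
    A.det = 1 ∧ B.det = 1 ∧ A ^ m = B ^ n ∧ ¬ IsReduciblePair A B := by
  have hl0 : l ≠ 0 := by
    rintro rfl
    simp [hm.ne'] at hl
  have hmu0 : mu ≠ 0 := by
    rintro rfl
    exact hl0 (pow_eq_zero_iff hm.ne' |>.mp (hlm.trans (zero_pow hn.ne')))
  have hc : (l ^ m) ^ 2 = 1 := by rw [← pow_mul, mul_comm, hl]
  have hQ := isUnit_Qmat r
  subst hAdef hBdef
  refine ⟨det_Dmat hl0, by rw [det_conj hQ, det_Dmat hmu0], ?_,
    not_isReduciblePair_Dmat_Qmat_conj (ne_inv_of_sq_ne_one hl0 hl2)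
      (ne_inv_of_sq_ne_one hmu0 hmu2) hr0 hr1⟩
  calc Dmat l ^ m = (l ^ m) • 1 := by rw [Dmat_pow, Dmat_eq_smul_one_of_sq_eq_one hc]
    _ = Qmat r * ((l ^ m) • 1) * (Qmat r)⁻¹ := by
      rw [Matrix.mul_smul, mul_one, Matrix.smul_mul,
        mul_nonsing_inv _ ((isUnit_iff_isUnit_det _).mp hQ)]
    _ = (Qmat r * Dmat mu * (Qmat r)⁻¹) ^ n := by
      rw [conj_pow_of_isUnit hQ, Dmat_pow, hlm, Dmat_eq_smul_one_of_sq_eq_one (hlm ▸ hc)]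
end

section
/- Let G be a group and let λ, λ' : G → ℂ* be two group homomorphisms such that λ(g) + λ(g)⁻¹ = λ'(g) + λ'(g)⁻¹ for every g ∈ G. Then either λ' = λ, or λ'(g) = λ(g)⁻¹ for all g ∈ G. -/
/-! The relation `x + x⁻¹ = y + y⁻¹` factors as `(y - x) (x y - 1) = 0`, so pointwise `λ' g` is
`λ g` or `(λ g)⁻¹`. The points where each alternative holds form two subgroups of `G` (equalizers of
`λ'` with `λ` and with `λ⁻¹`), and a group is never the union of two proper subgroups. -/

theorem Units.eq_or_eq_inv_of_add_inv_eq {K : Type*} [Field K] (x y : Kˣ)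
    (h : (x : K) + (x : K)⁻¹ = (y : K) + (y : K)⁻¹) : y = x ∨ y = x⁻¹ := by
  have hx : (x : K) ≠ 0 := x.ne_zero
  have hy : (y : K) ≠ 0 := y.ne_zero
  have factored : ((y : K) - x) * ((x : K) * y - 1) = 0 := by
    field_simp at h
    linear_combination -h
  rcases mul_eq_zero.mp factored with hxy | hxy
  · exact Or.inl (Units.ext (sub_eq_zero.mp hxy))
  · refine Or.inr (Units.ext ?_)
    rw [Units.val_inv_eq_inv_val]
    exact eq_inv_of_mul_eq_one_right (sub_eq_zero.mp hxy)

theorem MonoidHom.eq_or_eq_inv_of_forall_eq_or_eq_inv {G A : Type*} [Group G] [CommGroup A]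
    (f g : G →* A) (h : ∀ x, g x = f x ∨ g x = (f x)⁻¹) :
    (∀ x, g x = f x) ∨ ∀ x, g x = (f x)⁻¹ := by
  have cover : ((⊤ : Subgroup G) : Set G) ⊆ g.eqLocus f ∪ g.eqLocus f⁻¹ := fun x _ => h x
  exact (SubgroupClass.subset_union.mp cover).imp (fun hle x => hle (Subgroup.mem_top x))
    (fun hle x => hle (Subgroup.mem_top x))

theorem stmt9 (G : Type*) [Group G] (l l' : G →* ℂˣ)
    (h : ∀ g : G, (l g : ℂ) + (l g : ℂ)⁻¹ = (l' g : ℂ) + (l' g : ℂ)⁻¹) :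
    (∀ g : G, l' g = l g) ∨ (∀ g : G, l' g = (l g)⁻¹) :=
  l.eq_or_eq_inv_of_forall_eq_or_eq_inv l' fun g => Units.eq_or_eq_inv_of_add_inv_eq _ _ (h g)
end

section
/- Let m, n be coprime positive integers and let t, u ∈ ℂ*. If t^n + t^{-n} = u^n + u^{-n}, t^m + t^{-m} = u^m + u^{-m}, and t^{n+m} + t^{-(n+m)} = u^{n+m} + u^{-(n+m)}, then u = t or u = t⁻¹. -/
/-!
Since `x + x⁻¹ = y + y⁻¹` forces `y = x` or `y = x⁻¹`, each of the three hypotheses says that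
`p = u / t` or `q = u * t` has `k`-th power `1`, for `k = n, m, n + m`. Any two of these exponents
are coprime, and by pigeonhole two of the three alternatives concern the same element, which is
then a root of unity of coprime orders, hence `1`.
-/

theorem eq_one_of_pow_eq_one_of_coprime {M : Type*} [Monoid M] {x : M} {k l : ℕ}
    (hkl : k.Coprime l) (hk : x ^ k = 1) (hl : x ^ l = 1) : x = 1 := by
  simpa [hkl] using pow_gcd_eq_one.2 ⟨hk, hl⟩

theorem eq_one_or_eq_one_of_pow_eq_one_or_pow_eq_one {M : Type*} [Monoid M] {p q : M} {k l : ℕ}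
    (hkl : k.Coprime l) (hk : p ^ k = 1 ∨ q ^ k = 1) (hl : p ^ l = 1 ∨ q ^ l = 1)
    (hkl' : p ^ (k + l) = 1 ∨ q ^ (k + l) = 1) : p = 1 ∨ q = 1 := by
  have h₁ : k.Coprime (k + l) := Nat.coprime_self_add_right.2 hkl
  have h₂ : (k + l).Coprime l := Nat.coprime_add_self_left.2 hkl
  rcases hk with hpk | hqk <;> rcases hl with hpl | hql
  · exact .inl (eq_one_of_pow_eq_one_of_coprime hkl hpk hpl)
  · rcases hkl' with hp | hq
    · exact .inl (eq_one_of_pow_eq_one_of_coprime h₁ hpk hp)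
    · exact .inr (eq_one_of_pow_eq_one_of_coprime h₂ hq hql)
  · rcases hkl' with hp | hq
    · exact .inl (eq_one_of_pow_eq_one_of_coprime h₂ hp hpl)
    · exact .inr (eq_one_of_pow_eq_one_of_coprime h₁ hqk hq)
  · exact .inr (eq_one_of_pow_eq_one_of_coprime hkl hqk hql)

theorem eq_or_eq_inv_of_add_inv_eq_add_inv {K : Type*} [Field K] {x y : K} (hx : x ≠ 0)
    (hy : y ≠ 0) (h : x + x⁻¹ = y + y⁻¹) : y = x ∨ y = x⁻¹ := by
  have hfactor : (y - x) * (x * y - 1) = 0 := by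
    field_simp at h
    linear_combination -h
  rcases mul_eq_zero.1 hfactor with h | h
  · exact .inl (sub_eq_zero.1 h)
  · exact .inr (eq_inv_of_mul_eq_one_left (by linear_combination h))

theorem div_pow_eq_one_or_mul_pow_eq_one {K : Type*} [Field K] {t u : K} (ht : t ≠ 0)
    (hu : u ≠ 0) {k : ℕ} (h : t ^ k + (t ^ k)⁻¹ = u ^ k + (u ^ k)⁻¹) :
    (u / t) ^ k = 1 ∨ (u * t) ^ k = 1 := by
  rw [div_pow, mul_pow, div_eq_one_iff_eq (pow_ne_zero k ht)]
  refine (eq_or_eq_inv_of_add_inv_eq_add_inv (pow_ne_zero k ht) (pow_ne_zero k hu) h).imp id ?_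
  intro h
  rw [h, inv_mul_cancel₀ (pow_ne_zero k ht)]

theorem stmt10_general (m n : ℕ) (hcop : Nat.Coprime m n)
    (t u : ℂ) (ht : t ≠ 0) (hu : u ≠ 0)
    (h1 : t ^ n + (t ^ n)⁻¹ = u ^ n + (u ^ n)⁻¹)
    (h2 : t ^ m + (t ^ m)⁻¹ = u ^ m + (u ^ m)⁻¹)
    (h3 : t ^ (n + m) + (t ^ (n + m))⁻¹ = u ^ (n + m) + (u ^ (n + m))⁻¹) :
    u = t ∨ u = t⁻¹ := by
  have hpq := eq_one_or_eq_one_of_pow_eq_one_or_pow_eq_one hcop.symm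
    (div_pow_eq_one_or_mul_pow_eq_one ht hu h1) (div_pow_eq_one_or_mul_pow_eq_one ht hu h2)
    (div_pow_eq_one_or_mul_pow_eq_one ht hu h3)
  rw [div_eq_one_iff_eq ht] at hpq
  exact hpq.imp id eq_inv_of_mul_eq_one_left

theorem stmt10 (m n : ℕ) (hm : 0 < m) (hn : 0 < n) (hcop : Nat.Coprime m n)
    (t u : ℂ) (ht : t ≠ 0) (hu : u ≠ 0)
    (h1 : t ^ n + (t ^ n)⁻¹ = u ^ n + (u ^ n)⁻¹)
    (h2 : t ^ m + (t ^ m)⁻¹ = u ^ m + (u ^ m)⁻¹)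
    (h3 : t ^ (n + m) + (t ^ (n + m))⁻¹ = u ^ (n + m) + (u ^ (n + m))⁻¹) :
    u = t ∨ u = t⁻¹ :=
  stmt10_general m n hcop t u ht hu h1 h2 h3
end

section
/- For a natural number k, let p_k denote the k-th Dickson polynomial of the first kind with parameter 1 over ℂ, characterized by p_k(t + t⁻¹) = t^k + t^{-k} for all t ∈ ℂ*. Let m, n be coprime positive integers. Then for every s ∈ ℂ, the three derivatives p_n'(s), p_m'(s), p_{m+n}'(s) are not all zero. -/
/-!
Write `s = 2 cos θ`. Since `p_k'(2x) = k U_{k-1}(x)` for the Chebyshev polynomial `U`, we get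
`p_k'(s) sin θ = k sin (k θ)`. At a common zero of `p_m'` and `p_n'` both `mθ` and `nθ` are thus
multiples of `π`, hence so is `θ = (u m + v n) θ` for a Bézout relation `u m + v n = 1`. Then
`s = ±2`, but `p_k'(±2) = ±k² ≠ 0`.
-/

open Polynomial Polynomial.Chebyshev

theorem dickson_one_one_derivative {R : Type*} [CommRing R] [Invertible (2 : R)] (k : ℕ) :
    derivative (dickson 1 (1 : R) k) = k * (U R (k - 1 : ℤ)).comp (C ⅟2 * X) := by
  rw [dickson_one_one_eq_chebyshev_T, derivative_mul, derivative_comp, T_derivative_eq_U]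
  simp only [derivative_ofNat, zero_mul, zero_add, derivative_mul, derivative_C, derivative_X,
    mul_one, mul_comp, natCast_comp, Int.cast_natCast]
  have half_mul_two : C (⅟2 : R) * 2 = 1 := by
    rw [← C_ofNat, ← Polynomial.C_mul, invOf_mul_self, Polynomial.C_1]
  linear_combination (k * (U R (k - 1 : ℤ)).comp (C ⅟2 * X)) * half_mul_two

theorem Polynomial.Chebyshev.U_sub_one_eval_ne_zero {R : Type*} [CommRing R] [IsDomain R]
    [CharZero R] {n : ℕ} (hn : n ≠ 0) {x : R} (hx : x = 1 ∨ x = -1) :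
    (U R (n - 1 : ℤ)).eval x ≠ 0 := by
  rcases hx with rfl | rfl
  · simp [hn]
  · simp [U_eval_neg_one, hn, Int.negOnePow]

theorem Polynomial.Chebyshev.U_sub_one_eval_cos_mul_sin (k : ℕ) (θ : ℂ) :
    (U ℂ (k - 1 : ℤ)).eval (Complex.cos θ) * Complex.sin θ = Complex.sin (k * θ) := by
  simp [U_complex_cos θ (k - 1)]

theorem Complex.sin_eq_zero_of_sin_mul_eq_zero {m n : ℤ} (h : IsCoprime m n) {θ : ℂ}
    (hm : sin (m * θ) = 0) (hn : sin (n * θ) = 0) : sin θ = 0 := by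
  obtain ⟨a, ha⟩ := sin_eq_zero_iff.mp hm
  obtain ⟨b, hb⟩ := sin_eq_zero_iff.mp hn
  obtain ⟨u, v, huv⟩ := h
  have hθ : θ = ((u * a + v * b : ℤ) : ℂ) * Real.pi :=
    calc θ = ((u * m + v * n : ℤ) : ℂ) * θ := by rw [huv]; simp
    _ = u * (m * θ) + v * (n * θ) := by push_cast; ring
    _ = ((u * a + v * b : ℤ) : ℂ) * Real.pi := by rw [ha, hb]; push_cast; ring
  rw [hθ]
  exact sin_int_mul_pi _

theorem Polynomial.Chebyshev.not_U_sub_one_eval_eq_zero_and_of_coprime {m n : ℕ} (hn : n ≠ 0)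
    (h : m.Coprime n) (x : ℂ) :
    ¬((U ℂ (m - 1 : ℤ)).eval x = 0 ∧ (U ℂ (n - 1 : ℤ)).eval x = 0) := by
  rintro ⟨hxm, hxn⟩
  obtain ⟨θ, rfl⟩ := Complex.cos_surjective x
  have hsin : Complex.sin θ = 0 := by
    refine Complex.sin_eq_zero_of_sin_mul_eq_zero (Nat.isCoprime_iff_coprime.mpr h) ?_ ?_
    · simpa [hxm] using (U_sub_one_eval_cos_mul_sin m θ).symm
    · simpa [hxn] using (U_sub_one_eval_cos_mul_sin n θ).symm
  have hcos : Complex.cos θ = 1 ∨ Complex.cos θ = -1 := by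
    rw [← sq_eq_one_iff]
    linear_combination Complex.sin_sq_add_cos_sq θ - hsin * Complex.sin θ
  exact U_sub_one_eval_ne_zero hn hcos hxn

theorem stmt11 (m n : ℕ) (hm : 0 < m) (hn : 0 < n) (hcop : Nat.Coprime m n) (s : ℂ) :
    ¬ ((derivative (dickson 1 (1 : ℂ) n)).eval s = 0 ∧
        (derivative (dickson 1 (1 : ℂ) m)).eval s = 0 ∧
        (derivative (dickson 1 (1 : ℂ) (m + n))).eval s = 0) := by
  rintro ⟨hn', hm', -⟩
  simp only [dickson_one_one_derivative, eval_mul, eval_natCast, eval_comp, eval_C, eval_X,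
    mul_eq_zero, Nat.cast_eq_zero, hm.ne', hn.ne', false_or] at hn' hm'
  exact not_U_sub_one_eval_eq_zero_and_of_coprime hn.ne' hcop _ ⟨hm', hn'⟩
end
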